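/- The tensor rank of |W⟩^{⊗2}, viewed as a tripartite vector in (ℂ²⊗ℂ²)⊗(ℂ²⊗ℂ²)⊗(ℂ²⊗ℂ²) ≅ ℂ⁴⊗ℂ⁴⊗ℂ⁴ (with the copies regrouped by party), is at most 7. -/

import Mathlib

open TensorProduct

/-- Tripartite tensor rank: minimal number of product vectors summing to `ψ`. -/
noncomputable def tRank {A B C : Type*} [AddCommGroup A] [Module ℂ A]
    [AddCommGroup B] [Module ℂ B] [AddCommGroup C] [Module ℂ C]
    (ψ : A ⊗[ℂ] (B ⊗[ℂ] C)) : ℕ :=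
  sInf {r | ∃ (a : Fin r → A) (b : Fin r → B) (c : Fin r → C),
    ψ = ∑ i, a i ⊗ₜ[ℂ] (b i ⊗ₜ[ℂ] c i)}

/-- ℂ⁴ with standard basis `e 0, e 1, e 2, e 3`. -/
abbrev Q4 : Type := Fin 4 → ℂ

noncomputable def e (i : Fin 4) : Q4 := Pi.single i 1

/-- Party-`p` index (in `Fin 4`, via `|i⟩=|i₀i₁⟩`, `|0⟩=|00⟩,|1⟩=|01⟩,|2⟩=|10⟩,|3⟩=|11⟩`)
of the summand of `W ⊗ W` in which copy 1 gives its excitation to party `f 0`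
and copy 2 to party `f 1`. -/
def idx (p : Fin 3) (f : Fin 2 → Fin 3) : Fin 4 :=
  2 * (if f 0 = p then 1 else 0) + (if f 1 = p then 1 else 0)

/-- `W ⊗ W`, regrouped party-wise as an element of `ℂ⁴ ⊗ ℂ⁴ ⊗ ℂ⁴`. -/
noncomputable def W2 : Q4 ⊗[ℂ] (Q4 ⊗[ℂ] Q4) :=
  ∑ f : Fin 2 → Fin 3, e (idx 0 f) ⊗ₜ[ℂ] (e (idx 1 f) ⊗ₜ[ℂ] e (idx 2 f))

/-! `W ⊗ W` is a sum of nine product vectors, one for each choice of the excited party in each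
copy. Seven suffice: an explicit decomposition, with equal factors for parties `A` and `B`, is
checked by expanding both sides multilinearly in the standard basis. -/

theorem tRank_le_of_eq_sum {A B C : Type*} [AddCommGroup A] [Module ℂ A]
    [AddCommGroup B] [Module ℂ B] [AddCommGroup C] [Module ℂ C]
    {ψ : A ⊗[ℂ] (B ⊗[ℂ] C)} {r : ℕ} (a : Fin r → A) (b : Fin r → B) (c : Fin r → C)
    (h : ψ = ∑ i, a i ⊗ₜ[ℂ] (b i ⊗ₜ[ℂ] c i)) : tRank ψ ≤ r :=
  Nat.sInf_le ⟨a, b, c, h⟩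

theorem W2_eq_sum_nine : W2 =
    e 3 ⊗ₜ[ℂ] (e 0 ⊗ₜ[ℂ] e 0) + e 2 ⊗ₜ[ℂ] (e 1 ⊗ₜ[ℂ] e 0) + e 2 ⊗ₜ[ℂ] (e 0 ⊗ₜ[ℂ] e 1)
  + e 1 ⊗ₜ[ℂ] (e 2 ⊗ₜ[ℂ] e 0) + e 0 ⊗ₜ[ℂ] (e 3 ⊗ₜ[ℂ] e 0) + e 0 ⊗ₜ[ℂ] (e 2 ⊗ₜ[ℂ] e 1)
  + e 1 ⊗ₜ[ℂ] (e 0 ⊗ₜ[ℂ] e 2) + e 0 ⊗ₜ[ℂ] (e 1 ⊗ₜ[ℂ] e 2) + e 0 ⊗ₜ[ℂ] (e 0 ⊗ₜ[ℂ] e 3) := by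
  rw [W2, ← (piFinTwoEquiv fun _ => Fin 3).symm.sum_comp, Fintype.sum_prod_type]
  simp only [Fin.sum_univ_three, piFinTwoEquiv_symm_apply]
  simp only [idx, Fin.cons_zero, Fin.cons_one, Fin.isValue, Fin.reduceEq, Fin.reduceAdd,
    Fin.reduceMul, ↓reduceIte]
  abel

noncomputable def w2FactorAB : Fin 7 → Q4 :=
  ![e 0,
    e 0 + (1/2 : ℂ) • e 1 + (1/2 : ℂ) • e 2 + (1/2 : ℂ) • e 3,
    e 0 - (1/2 : ℂ) • e 1 - (1/2 : ℂ) • e 2 + (1/2 : ℂ) • e 3,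
    e 0 + e 1 + e 2 + (2 : ℂ) • e 3,
    (1/2 : ℂ) • e 3,
    (1/2 : ℂ) • e 1 - (1/2 : ℂ) • e 2,
    e 0 + (1/2 : ℂ) • e 1 - (1/2 : ℂ) • e 2]

noncomputable def w2FactorC : Fin 7 → Q4 :=
  ![(-2 : ℂ) • e 0 + (1/2 : ℂ) • e 1 - (3/2 : ℂ) • e 2 + e 3,
    e 0 + e 1 + e 2,
    e 0 - (1/3 : ℂ) • e 1 - (1/3 : ℂ) • e 2,
    -(1/6 : ℂ) • e 1 - (1/6 : ℂ) • e 2,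
    (-2 : ℂ) • e 0 + (2 : ℂ) • e 1 + (2 : ℂ) • e 2,
    (-2 : ℂ) • e 0 + e 1 - e 2,
    e 2 - e 1]

theorem W2_eq_sum_seven :
    W2 = ∑ i, w2FactorAB i ⊗ₜ[ℂ] (w2FactorAB i ⊗ₜ[ℂ] w2FactorC i) := by
  rw [W2_eq_sum_nine]
  simp only [w2FactorAB, w2FactorC, Fin.sum_univ_succ, Fin.sum_univ_zero, Matrix.cons_val_zero,
    Matrix.cons_val_succ, add_zero]
  simp only [tmul_add, add_tmul, tmul_sub, sub_tmul, ← smul_tmul', tmul_smul, smul_smul]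
  module

theorem rank_W2_le_seven : tRank W2 ≤ 7 :=
  tRank_le_of_eq_sum _ _ _ W2_eq_sum_seven
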